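/- (Invariant domain.) Let T > 0 and let (u,z,m) be a C² solution of the system on an open set containing [0,T] × ℝ, with constants 0 < Z_L < z < Z_U, 0 < M₁ < m < M₂, |m_x| < M₃ and |m_xx| < M₄ on [0,T] × ℝ. Suppose a₀(t,x) ≥ 0 for all (t,x) ∈ [0,T] × ℝ. If y(0,x) > 0 and q(0,x) > 0 for all x ∈ ℝ, then y(t,x) > 0 and q(t,x) > 0 for all (t,x) ∈ [0,T] × ℝ; that is, {y > 0, q > 0} is an invariant domain when a₀ ≥ 0. -/

import Mathlib

/-!
Since `m_t = 0`, the hypothesis `a₀ ≥ 0` at `t = 0` says that `x ↦ m(0, x) ^ (-2 / (3γ - 1))` is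
concave; a positive concave function on `ℝ` is constant, so `m` is constant on the strip and
`m_x`, `m_xx` vanish there. Then `u ± m z` are Riemann invariants, and differentiating them in `x`
shows that `y` and `q` obey, along the characteristics `dx/dt = ± c`, the Riccati equations
`Y' = -a₂ Y²` with `a₂ = K_c μ m^(-κ) z^(μ - 1)` (`μ = (γ+1)/(2(γ-1))`, `κ` the exponent of `m` in
`y`), which the bounds on `z` and `m` keep bounded. A solution of `Y' = -a₂ Y²` with `a₂ ≤ A`
stays above the solution of `Y' = -A' Y²` with the same initial value for any `A' > A`, hence
positive.
-/

open Real

/-- Partial derivative with respect to `t` (the first coordinate). -/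
noncomputable def pdt (f : ℝ × ℝ → ℝ) (pt : ℝ × ℝ) : ℝ := fderiv ℝ f pt (1, 0)

/-- Partial derivative with respect to `x` (the second coordinate). -/
noncomputable def pdx (f : ℝ × ℝ → ℝ) (pt : ℝ × ℝ) : ℝ := fderiv ℝ f pt (0, 1)

open Set Filter Topology

section PartialDerivatives

variable {f g : ℝ × ℝ → ℝ} {pt : ℝ × ℝ}

lemma fderiv_apply_eq_pdt_pdx (f : ℝ × ℝ → ℝ) (pt v : ℝ × ℝ) :
    fderiv ℝ f pt v = v.1 * pdt f pt + v.2 * pdx f pt := by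
  obtain ⟨a, b⟩ := v
  nth_rewrite 1 [show ((a, b) : ℝ × ℝ) = a • ((1 : ℝ), (0 : ℝ)) + b • ((0 : ℝ), (1 : ℝ)) by simp]
  rw [map_add, map_smul, map_smul]
  simp [pdt, pdx]

lemma hasDerivAt_line (hf : DifferentiableAt ℝ f pt) (w : ℝ × ℝ) :
    HasDerivAt (fun s : ℝ => f (pt + s • w)) (fderiv ℝ f pt w) 0 := by
  have hline : HasDerivAt (fun s : ℝ => pt + s • w) w 0 := by
    simpa using ((hasDerivAt_id (0 : ℝ)).smul_const w).const_add pt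
  exact hf.hasFDerivAt.comp_hasDerivAt_of_eq 0 hline (by simp)

lemma fderiv_apply_eq_of_eventuallyEq {w : ℝ × ℝ} {d : ℝ} (hf : DifferentiableAt ℝ f pt)
    (hfg : f =ᶠ[𝓝 pt] g) (hg : HasDerivAt (fun s : ℝ => g (pt + s • w)) d 0) :
    fderiv ℝ f pt w = d := by
  have hline : Tendsto (fun s : ℝ => pt + s • w) (𝓝 0) (𝓝 pt) :=
    (by fun_prop : Continuous fun s : ℝ => pt + s • w).tendsto' 0 pt (by simp)
  exact (hasDerivAt_line hf w).unique (hg.congr_of_eventuallyEq (hfg.comp_tendsto hline))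

lemma hasDerivAt_pdx_slice {t x : ℝ} (hf : DifferentiableAt ℝ f (t, x)) :
    HasDerivAt (fun y => f (t, y)) (pdx f (t, x)) x :=
  hf.hasFDerivAt.comp_hasDerivAt x ((hasDerivAt_const (𝕜 := ℝ) x t).prodMk (hasDerivAt_id x))

lemma hasDerivAt_pdt_slice {t x : ℝ} (hf : DifferentiableAt ℝ f (t, x)) :
    HasDerivAt (fun s => f (s, x)) (pdt f (t, x)) t :=
  hf.hasFDerivAt.comp_hasDerivAt t ((hasDerivAt_id t).prodMk (hasDerivAt_const (𝕜 := ℝ) t x))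

lemma ContDiffAt.differentiableAt_fderiv_apply (hf : ContDiffAt ℝ 2 f pt) (v : ℝ × ℝ) :
    DifferentiableAt ℝ (fun q => fderiv ℝ f q v) pt :=
  ((hf.fderiv_right (m := 1) (by norm_num)).differentiableAt one_ne_zero).clm_apply
    (differentiableAt_const v)

lemma ContDiffAt.differentiableAt_pdx (hf : ContDiffAt ℝ 2 f pt) :
    DifferentiableAt ℝ (pdx f) pt :=
  hf.differentiableAt_fderiv_apply (0, 1)

lemma ContDiffAt.differentiableAt_pdt (hf : ContDiffAt ℝ 2 f pt) :
    DifferentiableAt ℝ (pdt f) pt :=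
  hf.differentiableAt_fderiv_apply (1, 0)

lemma ContDiffAt.pdt_pdx_comm (hf : ContDiffAt ℝ 2 f pt) : pdt (pdx f) pt = pdx (pdt f) pt := by
  have hD := (hf.fderiv_right (m := 1) (by norm_num)).differentiableAt one_ne_zero
  have happly : ∀ v w : ℝ × ℝ, fderiv ℝ (fun q => fderiv ℝ f q v) pt w
      = fderiv ℝ (fderiv ℝ f) pt w v := fun v w => by
    rw [fderiv_clm_apply hD (differentiableAt_const v)]
    simp
  change fderiv ℝ (fun q => fderiv ℝ f q (0, 1)) pt (1, 0)
    = fderiv ℝ (fun q => fderiv ℝ f q (1, 0)) pt (0, 1)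
  rw [happly, happly]
  exact hf.isSymmSndFDerivAt (by simp) _ _

end PartialDerivatives

lemma ConcaveOn.eq_zero_of_hasDerivAt_of_pos {g : ℝ → ℝ} {d x : ℝ} (hg : ConcaveOn ℝ univ g)
    (hpos : ∀ y, 0 < g y) (hd : HasDerivAt g d x) : d = 0 := by
  by_contra hne
  -- The tangent line at `x` dominates `g`, and it reaches `-1` at `y`.
  set y := x - (g x + 1) / d
  have hgx := hpos x
  rcases lt_or_gt_of_ne hne with hneg | hpos'
  · have hxy : x < y := by
      have : (g x + 1) / d < 0 := div_neg_of_pos_of_neg (by linarith) hneg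
      linarith
    have hslope := hg.slope_le_of_hasDerivAt (mem_univ x) (mem_univ y) hxy hd
    rw [slope_def_field, div_le_iff₀ (sub_pos.2 hxy)] at hslope
    have : d * (y - x) = -(g x + 1) := by simp only [y]; field_simp; ring
    linarith [hpos y]
  · have hyx : y < x := by
      have : 0 < (g x + 1) / d := div_pos (by linarith) hpos'
      linarith
    have hslope := hg.le_slope_of_hasDerivAt (mem_univ y) (mem_univ x) hyx hd
    rw [slope_def_field, le_div_iff₀ (sub_pos.2 hyx)] at hslope
    have : d * (x - y) = g x + 1 := by simp only [y]; field_simp; ring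
    linarith [hpos y]

lemma eq_zero_of_mul_sq_deriv_le_mul_deriv2 {h h' h'' : ℝ → ℝ} {k : ℝ}
    (hd : ∀ x, HasDerivAt h (h' x) x) (hd' : ∀ x, HasDerivAt h' (h'' x) x)
    (hpos : ∀ x, 0 < h x) (hk : 1 < k) (hineq : ∀ x, k * h' x ^ 2 ≤ h x * h'' x) (x : ℝ) :
    h' x = 0 := by
  -- `h ^ (1 - k)` is concave and positive, hence constant.
  set θ := 1 - k
  have hθ : θ < 0 := by simp only [θ]; linarith
  have hg : ∀ x, HasDerivAt (fun y => h y ^ θ) (θ * h x ^ (θ - 1) * h' x) x := fun x => by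
    refine ((hd x).rpow_const (p := θ) (Or.inl (hpos x).ne')).congr_deriv ?_
    ring
  have hg' : ∀ x, HasDerivAt (fun y => θ * h y ^ (θ - 1) * h' y)
      (θ * h x ^ (θ - 2) * (h x * h'' x - k * h' x ^ 2)) x := fun x => by
    refine ((((hd x).rpow_const (p := θ - 1) (Or.inl (hpos x).ne')).const_mul θ).mul
      (hd' x)).congr_deriv ?_
    have : h x ^ (θ - 1) = h x ^ (θ - 2) * h x := by
      rw [← rpow_add_one (hpos x).ne']
      ring_nf
    rw [this, show θ - 1 - 1 = θ - 2 by ring]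
    simp only [θ]
    ring
  have hconc : ConcaveOn ℝ univ (fun y => h y ^ θ) := by
    refine concaveOn_of_hasDerivWithinAt2_nonpos convex_univ
      (fun y _ => (hg y).continuousAt.continuousWithinAt) (fun y _ => (hg y).hasDerivWithinAt)
      (fun y _ => (hg' y).hasDerivWithinAt) (fun y _ => ?_)
    exact mul_nonpos_of_nonpos_of_nonneg
      (mul_nonpos_of_nonpos_of_nonneg hθ.le (rpow_pos_of_pos (hpos y) _).le)
      (sub_nonneg.2 (hineq y))
  have h0 := hconc.eq_zero_of_hasDerivAt_of_pos (fun y => rpow_pos_of_pos (hpos y) θ) (hg x)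
  simpa [hθ.ne, (rpow_pos_of_pos (hpos x) _).ne'] using h0

lemma pos_of_hasDerivWithinAt_neg_mul_sq {Y b : ℝ → ℝ} {a t₁ A : ℝ}
    (hY : ∀ t ∈ Icc a t₁, HasDerivWithinAt Y (-(b t) * Y t ^ 2) (Icc a t₁) t)
    (hb : ∀ t ∈ Icc a t₁, b t ≤ A) (ha : 0 < Y a) : ∀ t ∈ Icc a t₁, 0 < Y t := by
  -- Compare `Y` with the explicit solution `φ` of `φ' = -A' φ ^ 2`, `φ a = Y a`, for `A' > A`.
  set A' := max A 0 + 1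
  have hA' : 0 < A' := by positivity
  set φ : ℝ → ℝ := fun t => ((Y a)⁻¹ + A' * (t - a))⁻¹
  have hden : ∀ t, a ≤ t → 0 < (Y a)⁻¹ + A' * (t - a) := fun t ht => by
    have := mul_nonneg hA'.le (sub_nonneg.2 ht)
    have := inv_pos.2 ha
    linarith
  have hφ : ∀ t, a ≤ t → HasDerivAt φ (-A' * φ t ^ 2) t := fun t ht => by
    refine ((((hasDerivAt_id t).sub_const a).const_mul A').const_add (Y a)⁻¹).inv
      (hden t ht).ne' |>.congr_deriv ?_
    simp only [φ, mul_one, id_eq, inv_pow, neg_mul]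
    ring
  have hle : ∀ t ∈ Icc a t₁, φ t ≤ Y t := by
    refine image_le_of_deriv_right_lt_deriv_boundary' (f' := fun t => -A' * φ t ^ 2)
      (fun t ht => (hφ t ht.1).continuousAt.continuousWithinAt)
      (fun t ht => (hφ t ht.1).hasDerivWithinAt) (by simp [φ])
      (fun t ht => (hY t ht).continuousWithinAt)
      (fun t ht => (hY t (Ico_subset_Icc_self ht)).mono_of_mem_nhdsWithin
        (Icc_mem_nhdsGE_of_mem ht)) (fun t ht heq => ?_)
    have hφt : 0 < φ t ^ 2 := pow_pos (inv_pos.2 (hden t ht.1)) 2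
    have : b t < A' := (hb t (Ico_subset_Icc_self ht)).trans_lt
      ((le_max_left A 0).trans_lt (lt_add_one _))
    rw [← heq]
    nlinarith
  exact fun t ht => (inv_pos.2 (hden t ht.1)).trans_le (hle t ht)

lemma rpow_le_rpow_add_rpow_of_mem_Icc {a b x : ℝ} (ha : 0 < a) (hx : x ∈ Icc a b) (e : ℝ) :
    x ^ e ≤ a ^ e + b ^ e := by
  have hb : 0 < b ^ e := rpow_pos_of_pos (ha.trans_le (hx.1.trans hx.2)) e
  rcases le_or_gt 0 e with he | he
  · linarith [rpow_le_rpow (ha.le.trans hx.1) hx.2 he, rpow_pos_of_pos ha e]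
  · linarith [rpow_le_rpow_of_nonpos ha hx.1 he.le]

lemma exists_abs_mul_rpow_mul_rpow_le {α : Type*} {S : Set α} {f g : α → ℝ} {a₁ a₂ b₁ b₂ : ℝ}
    (ha : 0 < a₁) (hb : 0 < b₁) (hf : ∀ x ∈ S, f x ∈ Icc a₁ a₂) (hg : ∀ x ∈ S, g x ∈ Icc b₁ b₂)
    (k p q : ℝ) : ∃ C, ∀ x ∈ S, |k * f x ^ p * g x ^ q| ≤ C := by
  refine ⟨|k| * ((a₁ ^ p + a₂ ^ p) * (b₁ ^ q + b₂ ^ q)), fun x hx => ?_⟩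
  have hfx := rpow_pos_of_pos (ha.trans_le (hf x hx).1) p
  have hgx := rpow_pos_of_pos (hb.trans_le (hg x hx).1) q
  rw [mul_assoc, abs_mul, abs_of_pos (mul_pos hfx hgx)]
  have hfle := rpow_le_rpow_add_rpow_of_mem_Icc ha (hf x hx) p
  have hgle := rpow_le_rpow_add_rpow_of_mem_Icc hb (hg x hx) q
  exact mul_le_mul_of_nonneg_left (mul_le_mul hfle hgle hgx.le (hfx.le.trans hfle)) (abs_nonneg k)

lemma apply_eq_apply_zero_of_pdt_eq_zero {T : ℝ} {f : ℝ × ℝ → ℝ}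
    (hf : ∀ pt ∈ Icc 0 T ×ˢ univ, DifferentiableAt ℝ f pt)
    (hft : ∀ pt ∈ Icc 0 T ×ˢ univ, pdt f pt = 0) {t : ℝ} (ht : t ∈ Icc 0 T) (y : ℝ) :
    f (t, y) = f (0, y) := by
  refine constant_of_has_deriv_right_zero (f := fun s => f (s, y)) (b := T)
    (fun s hs => (hasDerivAt_pdt_slice (hf _ ⟨hs, trivial⟩)).continuousAt.continuousWithinAt)
    (fun s hs => ?_) t ht
  have hsS : (s, y) ∈ Icc 0 T ×ˢ univ := ⟨Ico_subset_Icc_self hs, trivial⟩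
  simpa [hft _ hsS] using (hasDerivAt_pdt_slice (hf _ hsS)).hasDerivWithinAt

lemma pdx_eq_zero_of_pdt_eq_zero_of_mul_sq_pdx_le {W : Set (ℝ × ℝ)} {T k : ℝ}
    {m : ℝ × ℝ → ℝ} (hW : IsOpen W) (hS : Icc 0 T ×ˢ univ ⊆ W) (hT : 0 ≤ T)
    (hm : ContDiffOn ℝ 2 m W) (hmpos : ∀ q ∈ W, 0 < m q) (hmt : ∀ q ∈ W, pdt m q = 0)
    (hk : 1 < k) (hineq : ∀ x, k * pdx m (0, x) ^ 2 ≤ m (0, x) * pdx (pdx m) (0, x)) :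
    ∀ pt ∈ Icc 0 T ×ˢ univ, pdx m pt = 0 ∧ pdx (pdx m) pt = 0 := by
  have hmS : ∀ pt ∈ Icc 0 T ×ˢ univ, ContDiffAt ℝ 2 m pt :=
    fun pt hpt => hm.contDiffAt (hW.mem_nhds (hS hpt))
  have hd : ∀ pt ∈ Icc 0 T ×ˢ univ, DifferentiableAt ℝ m pt :=
    fun pt hpt => (hmS pt hpt).differentiableAt two_ne_zero
  have h0S : ∀ x : ℝ, ((0 : ℝ), x) ∈ Icc 0 T ×ˢ univ := fun x => ⟨⟨le_rfl, hT⟩, trivial⟩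
  have h0 : ∀ x, pdx m (0, x) = 0 :=
    eq_zero_of_mul_sq_deriv_le_mul_deriv2 (fun x => hasDerivAt_pdx_slice (hd _ (h0S x)))
      (fun x => hasDerivAt_pdx_slice (hmS _ (h0S x)).differentiableAt_pdx)
      (fun x => hmpos _ (hS (h0S x))) hk hineq
  have hinit : ∀ y, m (0, y) = m (0, 0) := fun y =>
    is_const_of_deriv_eq_zero (f := fun y => m (0, y))
      (fun y => (hasDerivAt_pdx_slice (hd _ (h0S y))).differentiableAt)
      (fun y => by rw [(hasDerivAt_pdx_slice (hd _ (h0S y))).deriv, h0]) y 0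
  rintro ⟨t, x⟩ ⟨ht, -⟩
  have hconst : ∀ y, m (t, y) = m (0, 0) := fun y =>
    (apply_eq_apply_zero_of_pdt_eq_zero hd (fun q hq => hmt q (hS hq)) ht y).trans (hinit y)
  have hx : ∀ y, pdx m (t, y) = 0 := fun y => by
    have := hasDerivAt_pdx_slice (hd (t, y) ⟨ht, trivial⟩)
    simp only [hconst] at this
    exact this.unique (hasDerivAt_const _ _)
  refine ⟨hx x, ?_⟩
  have := hasDerivAt_pdx_slice (hmS (t, x) ⟨ht, trivial⟩).differentiableAt_pdx
  simp only [hx] at this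
  exact this.unique (hasDerivAt_const _ _)

lemma exists_characteristic {T C : ℝ} {v : ℝ × ℝ → ℝ} (hv : ContDiffOn ℝ 1 v (Icc 0 T ×ˢ univ))
    (hvb : ∀ pt ∈ Icc 0 T ×ˢ univ, |v pt| ≤ C) {t₀ : ℝ} (ht₀ : t₀ ∈ Icc 0 T) (x₀ : ℝ) :
    ∃ χ : ℝ → ℝ, χ t₀ = x₀ ∧ ∀ t ∈ Icc 0 t₀, HasDerivWithinAt χ (v (t, χ t)) (Icc 0 t₀) t := by
  have hmem : ∀ t ∈ Icc 0 t₀, ∀ x : ℝ, (t, x) ∈ Icc 0 T ×ˢ univ :=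
    fun t ht x => ⟨⟨ht.1, ht.2.trans ht₀.2⟩, trivial⟩
  have hC : 0 ≤ C := (abs_nonneg _).trans (hvb _ (hmem t₀ ⟨ht₀.1, le_rfl⟩ x₀))
  -- A characteristic with speed at most `C` stays within distance `C T < R` of `x₀`.
  set R := C * T + 1
  have hR : 0 < R := by have := mul_nonneg hC (ht₀.1.trans ht₀.2); positivity
  obtain ⟨L, hL⟩ := (hv.mono (prod_mono subset_rfl (subset_univ (Metric.closedBall x₀ R))))
    |>.exists_lipschitzOnWith one_ne_zero (convex_Icc 0 T |>.prod (convex_closedBall x₀ R))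
      (isCompact_Icc.prod (isCompact_closedBall x₀ R))
  have hpl : IsPicardLindelof (fun t x => v (t, x)) (tmin := 0) (tmax := t₀)
      ⟨t₀, ⟨ht₀.1, le_rfl⟩⟩ x₀ ⟨R, hR.le⟩ 0 ⟨C, hC⟩ L := by
    refine ⟨fun t ht => ?_, fun x _ => ?_, fun t ht x _ => ?_, ?_⟩
    · change LipschitzOnWith L (fun x => v (t, x)) (Metric.closedBall x₀ R)
      simpa [Function.comp_def] using hL.comp (LipschitzWith.prodMk_left t).lipschitzOnWith
        (fun x hx => ⟨⟨ht.1, ht.2.trans ht₀.2⟩, hx⟩)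
    · exact hv.continuousOn.comp (by fun_prop) (fun t ht => hmem t ht x)
    · exact (Real.norm_eq_abs _).trans_le (hvb _ (hmem t ht x))
    · change C * max (t₀ - t₀) (t₀ - 0) ≤ R - 0
      rw [sub_self, sub_zero, sub_zero, max_eq_right ht₀.1]
      nlinarith [ht₀.2]
  exact hpl.exists_eq_forall_mem_Icc_hasDerivWithinAt₀

lemma pos_of_fderiv_eq_neg_mul_sq {T C A : ℝ} {v F a : ℝ × ℝ → ℝ}
    (hv : ContDiffOn ℝ 1 v (Icc 0 T ×ˢ univ)) (hvb : ∀ pt ∈ Icc 0 T ×ˢ univ, |v pt| ≤ C)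
    (hF : ∀ pt ∈ Icc 0 T ×ˢ univ, DifferentiableAt ℝ F pt)
    (hric : ∀ pt ∈ Icc 0 T ×ˢ univ, fderiv ℝ F pt (1, v pt) = -(a pt) * F pt ^ 2)
    (ha : ∀ pt ∈ Icc 0 T ×ˢ univ, a pt ≤ A) (h0 : ∀ x, 0 < F (0, x)) :
    ∀ pt ∈ Icc 0 T ×ˢ univ, 0 < F pt := by
  rintro ⟨t₀, x₀⟩ ⟨ht₀, -⟩
  obtain ⟨χ, hχ, hχd⟩ := exists_characteristic hv hvb ht₀ x₀
  have hmem : ∀ t ∈ Icc 0 t₀, (t, χ t) ∈ Icc 0 T ×ˢ univ :=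
    fun t ht => ⟨⟨ht.1, ht.2.trans ht₀.2⟩, trivial⟩
  have hY : ∀ t ∈ Icc 0 t₀, HasDerivWithinAt (fun s => F (s, χ s))
      (-(a (t, χ t)) * F (t, χ t) ^ 2) (Icc 0 t₀) t := fun t ht => by
    rw [← hric _ (hmem t ht)]
    exact (hF _ (hmem t ht)).hasFDerivAt.comp_hasDerivWithinAt t
      ((hasDerivWithinAt_id t _).prodMk (hχd t ht))
  simpa [hχ] using pos_of_hasDerivWithinAt_neg_mul_sq hY (fun t ht => ha _ (hmem t ht))
    (h0 _) t₀ ⟨ht₀.1, le_rfl⟩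

/-- The Euler system in the variables `(u, z, m)`, written with `c / m = Kc z ^ ν`,
`m c = Kc m ^ 2 z ^ ν` and `2 p / m = b m z ^ (ν + 1)`. -/
structure IsEulerSolution (Kc ν b : ℝ) (W : Set (ℝ × ℝ)) (u z m : ℝ × ℝ → ℝ) : Prop where
  isOpen : IsOpen W
  contDiffOn_u : ContDiffOn ℝ 2 u W
  contDiffOn_z : ContDiffOn ℝ 2 z W
  contDiffOn_m : ContDiffOn ℝ 2 m W
  pos_z : ∀ q ∈ W, 0 < z q
  pos_m : ∀ q ∈ W, 0 < m q
  pdt_z : ∀ q ∈ W, pdt z q = -(Kc * z q ^ ν * pdx u q)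
  pdt_u : ∀ q ∈ W,
    pdt u q = -(Kc * m q ^ 2 * z q ^ ν * pdx z q + b * m q * z q ^ (ν + 1) * pdx m q)
  pdt_m : ∀ q ∈ W, pdt m q = 0

lemma IsEulerSolution.of_isentropic {γ Kc : ℝ} {W : Set (ℝ × ℝ)} {u z m : ℝ × ℝ → ℝ}
    (hγ : 1 < γ) (hW : IsOpen W) (hu : ContDiffOn ℝ 2 u W) (hz : ContDiffOn ℝ 2 z W)
    (hm : ContDiffOn ℝ 2 m W) (hzpos : ∀ pt ∈ W, 0 < z pt) (hmpos : ∀ pt ∈ W, 0 < m pt)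
    (heq1 : ∀ pt ∈ W,
      pdt z pt + (Kc * m pt * z pt ^ ((γ + 1) / (γ - 1)) / m pt) * pdx u pt = 0)
    (heq2 : ∀ pt ∈ W, pdt u pt + m pt * (Kc * m pt * z pt ^ ((γ + 1) / (γ - 1))) * pdx z pt
      + 2 * ((γ - 1) / (2 * γ) * Kc * m pt ^ 2 * z pt ^ (2 * γ / (γ - 1)) / m pt) * pdx m pt = 0)
    (heq3 : ∀ pt ∈ W, pdt m pt = 0) :
    IsEulerSolution Kc ((γ + 1) / (γ - 1)) ((γ - 1) / γ * Kc) W u z m := by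
  have hγ0 : γ ≠ 0 := by positivity
  have hγ1 : γ - 1 ≠ 0 := sub_ne_zero.2 hγ.ne'
  have hexp : (γ + 1) / (γ - 1) + 1 = 2 * γ / (γ - 1) := by field_simp; ring
  refine ⟨hW, hu, hz, hm, hzpos, hmpos, fun q hq => ?_, fun q hq => ?_, heq3⟩
  · have hm0 := (hmpos q hq).ne'
    linear_combination (heq1 q hq) - (by field_simp : Kc * m q * z q ^ ((γ + 1) / (γ - 1)) / m q
      = Kc * z q ^ ((γ + 1) / (γ - 1))) * pdx u q
  · have hm0 := (hmpos q hq).ne'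
    rw [hexp]
    linear_combination (heq2 q hq) - (by field_simp :
      2 * ((γ - 1) / (2 * γ) * Kc * m q ^ 2 * z q ^ (2 * γ / (γ - 1)) / m q)
        = (γ - 1) / γ * Kc * m q * z q ^ (2 * γ / (γ - 1))) * pdx m q

namespace IsEulerSolution

variable {Kc ν b : ℝ} {W : Set (ℝ × ℝ)} {u z m : ℝ × ℝ → ℝ} {pt : ℝ × ℝ}

lemma contDiffAt_u (hs : IsEulerSolution Kc ν b W u z m) (hpt : pt ∈ W) : ContDiffAt ℝ 2 u pt :=
  hs.contDiffOn_u.contDiffAt (hs.isOpen.mem_nhds hpt)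

lemma contDiffAt_z (hs : IsEulerSolution Kc ν b W u z m) (hpt : pt ∈ W) : ContDiffAt ℝ 2 z pt :=
  hs.contDiffOn_z.contDiffAt (hs.isOpen.mem_nhds hpt)

lemma contDiffAt_m (hs : IsEulerSolution Kc ν b W u z m) (hpt : pt ∈ W) : ContDiffAt ℝ 2 m pt :=
  hs.contDiffOn_m.contDiffAt (hs.isOpen.mem_nhds hpt)

lemma contDiffOn_speed (hs : IsEulerSolution Kc ν b W u z m) (σ : ℝ) :
    ContDiffOn ℝ 1 (fun q => σ * (Kc * m q * z q ^ ν)) W :=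
  contDiffOn_const.mul ((contDiffOn_const.mul (hs.contDiffOn_m.of_le (by norm_num))).mul
    ((hs.contDiffOn_z.of_le (by norm_num)).rpow_const_of_ne fun q hq => (hs.pos_z q hq).ne'))

lemma pdt_pdx_m (hs : IsEulerSolution Kc ν b W u z m) (hpt : pt ∈ W) : pdt (pdx m) pt = 0 := by
  rw [(hs.contDiffAt_m hpt).pdt_pdx_comm]
  refine fderiv_apply_eq_of_eventuallyEq (hs.contDiffAt_m hpt).differentiableAt_pdt
    (g := fun _ => 0) ?_ (hasDerivAt_const _ _)
  filter_upwards [hs.isOpen.mem_nhds hpt] using hs.pdt_m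

lemma pdt_pdx_z (hs : IsEulerSolution Kc ν b W u z m) (hpt : pt ∈ W) :
    pdt (pdx z) pt = -(Kc * (ν * z pt ^ (ν - 1) * pdx z pt * pdx u pt
      + z pt ^ ν * pdx (pdx u) pt)) := by
  have hz := (hs.contDiffAt_z hpt).differentiableAt two_ne_zero
  have hux := (hs.contDiffAt_u hpt).differentiableAt_pdx
  rw [(hs.contDiffAt_z hpt).pdt_pdx_comm]
  refine fderiv_apply_eq_of_eventuallyEq (hs.contDiffAt_z hpt).differentiableAt_pdt
    (g := fun q => -(Kc * z q ^ ν * pdx u q)) ?_ ?_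
  · filter_upwards [hs.isOpen.mem_nhds hpt] using hs.pdt_z
  · refine ((((hasDerivAt_line hz (0, 1)).rpow_const (p := ν)
      (Or.inl (by simpa using (hs.pos_z pt hpt).ne'))).const_mul Kc).mul
      (hasDerivAt_line hux (0, 1))).neg.congr_deriv ?_
    simp only [fderiv_apply_eq_pdt_pdx, zero_mul, one_mul, zero_add, zero_smul, add_zero]
    ring

lemma pdt_pdx_u (hs : IsEulerSolution Kc ν b W u z m) (hpt : pt ∈ W) (hmx : pdx m pt = 0)
    (hmxx : pdx (pdx m) pt = 0) :
    pdt (pdx u) pt = -(Kc * m pt ^ 2 * (ν * z pt ^ (ν - 1) * pdx z pt ^ 2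
      + z pt ^ ν * pdx (pdx z) pt)) := by
  have hz := (hs.contDiffAt_z hpt).differentiableAt two_ne_zero
  have hm := (hs.contDiffAt_m hpt).differentiableAt two_ne_zero
  have hzx := (hs.contDiffAt_z hpt).differentiableAt_pdx
  have hmx' := (hs.contDiffAt_m hpt).differentiableAt_pdx
  have hz0 : z (pt + (0 : ℝ) • ((0 : ℝ), (1 : ℝ))) ≠ 0 := by simpa using (hs.pos_z pt hpt).ne'
  rw [(hs.contDiffAt_u hpt).pdt_pdx_comm]
  refine fderiv_apply_eq_of_eventuallyEq (hs.contDiffAt_u hpt).differentiableAt_pdt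
    (g := fun q => -(Kc * m q ^ 2 * z q ^ ν * pdx z q + b * m q * z q ^ (ν + 1) * pdx m q))
    ?_ ?_
  · filter_upwards [hs.isOpen.mem_nhds hpt] using hs.pdt_u
  · refine (((((hasDerivAt_line hm (0, 1)).pow 2).const_mul Kc).mul
      ((hasDerivAt_line hz (0, 1)).rpow_const (p := ν) (Or.inl hz0))).mul
      (hasDerivAt_line hzx (0, 1)) |>.add
      ((((hasDerivAt_line hm (0, 1)).const_mul b).mul
      ((hasDerivAt_line hz (0, 1)).rpow_const (p := ν + 1) (Or.inl hz0))).mul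
      (hasDerivAt_line hmx' (0, 1)))).neg.congr_deriv ?_
    simp only [fderiv_apply_eq_pdt_pdx, hmx, hmxx, zero_smul, add_zero, zero_mul, zero_add,
      one_mul, mul_zero, Pi.pow_apply, Pi.mul_apply, Nat.cast_ofNat]
    ring

theorem riccati (hs : IsEulerSolution Kc ν b W u z m) {μ κ σ e D : ℝ} (hν : ν = 2 * μ)
    (hσ : σ ^ 2 = 1) (hpt : pt ∈ W) (hmx : pdx m pt = 0) (hmxx : pdx (pdx m) pt = 0)
    {F : ℝ × ℝ → ℝ} (hF : F = fun q => m q ^ κ * (z q ^ μ *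
      (pdx u q + σ * (m q * pdx z q + e * pdx m q * z q)) + σ * D * z q ^ (μ + 1) * pdx m q)) :
    DifferentiableAt ℝ F pt ∧ fderiv ℝ F pt (1, σ * (Kc * m pt * z pt ^ ν))
      = -(Kc * μ * m pt ^ (-κ) * z pt ^ (μ - 1)) * F pt ^ 2 := by
  have hm := (hs.contDiffAt_m hpt).differentiableAt two_ne_zero
  have hz := (hs.contDiffAt_z hpt).differentiableAt two_ne_zero
  have hux := (hs.contDiffAt_u hpt).differentiableAt_pdx
  have hzx := (hs.contDiffAt_z hpt).differentiableAt_pdx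
  have hmx' := (hs.contDiffAt_m hpt).differentiableAt_pdx
  have hm0 := hs.pos_m pt hpt
  have hz0 := hs.pos_z pt hpt
  have hdiff : DifferentiableAt ℝ F pt := by
    rw [hF]
    fun_prop (disch := simp [hm0.ne', hz0.ne'])
  refine ⟨hdiff, ?_⟩
  subst hF
  set w : ℝ × ℝ := (1, σ * (Kc * m pt * z pt ^ ν))
  have hz0' : z (pt + (0 : ℝ) • w) ≠ 0 := by simpa using hz0.ne'
  have hline := ((hasDerivAt_line hm w).rpow_const (p := κ) (Or.inl (by simpa using hm0.ne'))).mul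
    ((((hasDerivAt_line hz w).rpow_const (p := μ) (Or.inl hz0')).mul
      ((hasDerivAt_line hux w).add
        ((((hasDerivAt_line hm w).mul (hasDerivAt_line hzx w)).add
          (((hasDerivAt_line hmx' w).const_mul e).mul (hasDerivAt_line hz w))).const_mul σ))).add
      ((((hasDerivAt_line hz w).rpow_const (p := μ + 1) (Or.inl hz0')).const_mul (σ * D)).mul
        (hasDerivAt_line hmx' w)))
  rw [(hasDerivAt_line hdiff w).unique hline]
  -- `m_x` and both of its partials vanish at `pt`, so the terms with `e` and `D` drop out.
  simp only [Pi.mul_apply, Pi.add_apply, zero_smul, add_zero, w, fderiv_apply_eq_pdt_pdx,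
    hs.pdt_m pt hpt, hs.pdt_z pt hpt, hs.pdt_pdx_m hpt, hs.pdt_pdx_z hpt, hs.pdt_pdx_u hpt hmx hmxx,
    hmx, hmxx]
  subst hν
  have hzν : z pt ^ (2 * μ) = z pt ^ μ * z pt ^ μ := by rw [two_mul, rpow_add hz0]
  rw [rpow_sub hz0, rpow_sub hz0, rpow_neg hm0.le, rpow_one, hzν]
  generalize z pt ^ μ = Z
  generalize m pt ^ κ = M
  field_simp
  linear_combination (z pt * Z ^ 3 * m pt ^ 2 * M * Kc * pdx (pdx z) pt
    + 2 * Z ^ 3 * m pt ^ 2 * pdx z pt ^ 2 * μ * M * Kc) * hσ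

theorem pos_of_pdx_m_eq_zero (hs : IsEulerSolution Kc ν b W u z m) {T : ℝ}
    (hS : Icc 0 T ×ˢ univ ⊆ W) (hflat : ∀ pt ∈ Icc 0 T ×ˢ univ, pdx m pt = 0 ∧ pdx (pdx m) pt = 0)
    {ZL ZU M1 M2 : ℝ} (hZL : 0 < ZL) (hM1 : 0 < M1)
    (hz : ∀ pt ∈ Icc 0 T ×ˢ univ, z pt ∈ Icc ZL ZU) (hm : ∀ pt ∈ Icc 0 T ×ˢ univ, m pt ∈ Icc M1 M2)
    {μ κ σ e D : ℝ} (hν : ν = 2 * μ)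
    (hσ : σ ^ 2 = 1) {F : ℝ × ℝ → ℝ} (hF : F = fun q => m q ^ κ * (z q ^ μ *
      (pdx u q + σ * (m q * pdx z q + e * pdx m q * z q)) + σ * D * z q ^ (μ + 1) * pdx m q))
    (h0 : ∀ x, 0 < F (0, x)) : ∀ pt ∈ Icc 0 T ×ˢ univ, 0 < F pt := by
  obtain ⟨A, hA⟩ := exists_abs_mul_rpow_mul_rpow_le hM1 hZL hm hz (Kc * μ) (-κ) (μ - 1)
  obtain ⟨C, hC⟩ := exists_abs_mul_rpow_mul_rpow_le hM1 hZL hm hz Kc 1 ν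
  have hσ1 : |σ| = 1 := (pow_eq_one_iff_of_nonneg (abs_nonneg σ) two_ne_zero).1 (by rw [sq_abs, hσ])
  have hric := fun pt hpt => hs.riccati hν hσ (hS hpt) (hflat pt hpt).1 (hflat pt hpt).2 hF
  refine pos_of_fderiv_eq_neg_mul_sq (C := C) ((hs.contDiffOn_speed σ).mono hS) (fun pt hpt => ?_)
    (fun pt hpt => (hric pt hpt).1) (fun pt hpt => (hric pt hpt).2)
    (fun pt hpt => (le_abs_self _).trans (hA pt hpt)) h0
  simpa [abs_mul, hσ1, mul_assoc] using hC pt hpt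

end IsEulerSolution

lemma mul_sq_le_of_a0_nonneg {γ Kc M Z m' m'' κ ρ : ℝ} (hγ : 1 < γ) (hKc : 0 < Kc) (hM : 0 < M)
    (hZ : 0 < Z) (h : 0 ≤ M ^ κ * (Kc / γ * ((γ - 1) / (3 * γ - 1) * M * m''
      - (3 * γ + 1) * (γ - 1) / (3 * γ - 1) ^ 2 * m' ^ 2) * Z ^ ρ)) :
    (3 * γ + 1) / (3 * γ - 1) * m' ^ 2 ≤ M * m'' := by
  have hγ1 : 0 < γ - 1 := by linarith
  have h3γ : 0 < 3 * γ - 1 := by linarith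
  have hfac : 0 < M ^ κ * (Kc / γ) * ((γ - 1) / (3 * γ - 1)) * Z ^ ρ :=
    mul_pos (mul_pos (mul_pos (rpow_pos_of_pos hM κ) (div_pos hKc (by linarith)))
      (div_pos hγ1 h3γ)) (rpow_pos_of_pos hZ ρ)
  have heq : M ^ κ * (Kc / γ * ((γ - 1) / (3 * γ - 1) * M * m''
      - (3 * γ + 1) * (γ - 1) / (3 * γ - 1) ^ 2 * m' ^ 2) * Z ^ ρ)
      = M ^ κ * (Kc / γ) * ((γ - 1) / (3 * γ - 1)) * Z ^ ρ
        * (M * m'' - (3 * γ + 1) / (3 * γ - 1) * m' ^ 2) := by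
    rw [sq, ← div_div]
    ring
  rw [heq] at h
  exact sub_nonneg.1 ((mul_nonneg_iff_of_pos_left hfac).1 h)

/-- Invariant domain: if `a₀ ≥ 0` on `[0,T] × ℝ` and `y, q > 0` initially,
then `y > 0` and `q > 0` on all of `[0,T] × ℝ`. -/
theorem stmt_16 (γ Kc : ℝ) (hγ : 1 < γ) (hKc : 0 < Kc)
    (T : ℝ) (hT : 0 < T)
    (W : Set (ℝ × ℝ)) (hW : IsOpen W) (hWT : Set.Icc (0 : ℝ) T ×ˢ (Set.univ : Set ℝ) ⊆ W)
    (u z m : ℝ × ℝ → ℝ)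
    (hu : ContDiffOn ℝ 2 u W) (hz : ContDiffOn ℝ 2 z W) (hm : ContDiffOn ℝ 2 m W)
    (hzpos : ∀ pt ∈ W, 0 < z pt) (hmpos : ∀ pt ∈ W, 0 < m pt)
    (c p : ℝ × ℝ → ℝ)
    (hc : c = fun pt => Kc * m pt * z pt ^ ((γ + 1) / (γ - 1)))
    (hp : p = fun pt => ((γ - 1) / (2 * γ) * Kc) * (m pt) ^ 2 * z pt ^ (2 * γ / (γ - 1)))
    (heq1 : ∀ pt ∈ W, pdt z pt + (c pt / m pt) * pdx u pt = 0)
    (heq2 : ∀ pt ∈ W, pdt u pt + m pt * c pt * pdx z pt + 2 * (p pt / m pt) * pdx m pt = 0)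
    (heq3 : ∀ pt ∈ W, pdt m pt = 0)
    (ZL ZU M1 M2 M3 M4 : ℝ) (hZL : 0 < ZL) (hM1 : 0 < M1)
    (hbounds : ∀ pt ∈ Set.Icc (0 : ℝ) T ×ˢ (Set.univ : Set ℝ),
      ZL < z pt ∧ z pt < ZU ∧ M1 < m pt ∧ m pt < M2 ∧ |pdx m pt| < M3 ∧ |pdx (pdx m) pt| < M4)
    (α β yt qt yf qf a0t a0 : ℝ × ℝ → ℝ)
    (hα : α = fun pt => pdx u pt + m pt * pdx z pt + ((γ - 1) / γ) * pdx m pt * z pt)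
    (hβ : β = fun pt => pdx u pt - m pt * pdx z pt - ((γ - 1) / γ) * pdx m pt * z pt)
    (hyt : yt = fun pt => z pt ^ ((γ + 1) / (2 * (γ - 1))) * α pt
      + ((γ - 1) / (γ * (3 * γ - 1))) * z pt ^ ((γ + 1) / (2 * (γ - 1)) + 1) * pdx m pt)
    (hqt : qt = fun pt => z pt ^ ((γ + 1) / (2 * (γ - 1))) * β pt
      - ((γ - 1) / (γ * (3 * γ - 1))) * z pt ^ ((γ + 1) / (2 * (γ - 1)) + 1) * pdx m pt)
    (hyf : yf = fun pt => m pt ^ (-(3 * (3 - γ)) / (2 * (3 * γ - 1))) * yt pt)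
    (hqf : qf = fun pt => m pt ^ (-(3 * (3 - γ)) / (2 * (3 * γ - 1))) * qt pt)
    (ha0t : a0t = fun pt => (Kc / γ) * (((γ - 1) / (3 * γ - 1)) * m pt * pdx (pdx m) pt
      - ((3 * γ + 1) * (γ - 1) / (3 * γ - 1) ^ 2) * (pdx m pt) ^ 2)
      * z pt ^ (3 * (γ + 1) / (2 * (γ - 1)) + 1))
    (ha0 : a0 = fun pt => m pt ^ (-(3 * (3 - γ)) / (2 * (3 * γ - 1))) * a0t pt)
    (ha0nonneg : ∀ pt ∈ Set.Icc (0 : ℝ) T ×ˢ (Set.univ : Set ℝ), 0 ≤ a0 pt)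
    (hinit : ∀ x : ℝ, 0 < yf (0, x) ∧ 0 < qf (0, x)) :
    ∀ pt ∈ Set.Icc (0 : ℝ) T ×ˢ (Set.univ : Set ℝ), 0 < yf pt ∧ 0 < qf pt := by
  subst hc hp ha0t ha0
  have hs := IsEulerSolution.of_isentropic hγ hW hu hz hm hzpos hmpos heq1 heq2 heq3
  have h0S : ∀ x : ℝ, ((0 : ℝ), x) ∈ Icc 0 T ×ˢ univ := fun x => ⟨⟨le_rfl, hT.le⟩, trivial⟩
  have hflat := pdx_eq_zero_of_pdt_eq_zero_of_mul_sq_pdx_le hW hWT hT.le hm hmpos heq3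
    (by rw [lt_div_iff₀ (by linarith)]; linarith) fun x => mul_sq_le_of_a0_nonneg hγ hKc
      (hmpos _ (hWT (h0S x))) (hzpos _ (hWT (h0S x))) (ha0nonneg _ (h0S x))
  have hzb : ∀ pt ∈ Icc 0 T ×ˢ univ, z pt ∈ Icc ZL ZU :=
    fun pt hpt => ⟨(hbounds pt hpt).1.le, (hbounds pt hpt).2.1.le⟩
  have hmb : ∀ pt ∈ Icc 0 T ×ˢ univ, m pt ∈ Icc M1 M2 :=
    fun pt hpt => ⟨(hbounds pt hpt).2.2.1.le, (hbounds pt hpt).2.2.2.1.le⟩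
  have hν : (γ + 1) / (γ - 1) = 2 * ((γ + 1) / (2 * (γ - 1))) := by field_simp
  have hpos := fun σ (hσ : σ ^ 2 = 1) F => hs.pos_of_pdx_m_eq_zero hWT hflat hZL hM1 hzb hmb hν hσ
    (F := F) (κ := -(3 * (3 - γ)) / (2 * (3 * γ - 1))) (e := (γ - 1) / γ)
    (D := (γ - 1) / (γ * (3 * γ - 1)))
  refine fun pt hpt => ⟨hpos 1 (by norm_num) yf ?_ (fun x => (hinit x).1) pt hpt,
    hpos (-1) (by norm_num) qf ?_ (fun x => (hinit x).2) pt hpt⟩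
  · subst hyf hyt hα
    funext q
    ring
  · subst hqf hqt hβ
    funext q
    ring
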